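/- arXiv:1710.05551 — 5 statements merged into one kernel-verified Lean document; each statement's English description precedes it below -/
import Mathlib

section
/- The multinomial coefficient Q_n = N! / ∏_{i=1}^M (n_i!) is strictly Schur-concave on vectors of nonnegative integers summing to N: if n and m are nonincreasing integer vectors with ∑ n_i = ∑ m_i = N and n is strictly majorized by m (n ≺ m and n is not a permutation of m), then Q_n > Q_m. -/
/-! The inequality `Q N n > Q N m` amounts to `∏ (n i)! < ∏ (m i)!`. Let `j` be the first index
with `m j < n j`; majorization at `j + 1` gives an `i < j` with `n i < m i`, and then the partial
sums of `n` lie strictly below those of `m` on `(i, j]`. Hence moving one unit of `m` from `i` to `j`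
keeps `n` majorized, and as `m j < n j ≤ n i < m i` it multiplies `∏ (m i)!` by
`(m j + 1) / m i < 1`. Strong induction on `∏ (m i)!` concludes. -/

open Finset

/-- `x` is majorized by `y`: all partial sums of `x` are dominated by those of `y`,
and the total sums agree. -/
def Maj {M : ℕ} (x y : Fin M → ℕ) : Prop :=
  (∀ k : ℕ, k < M → ∑ i ∈ univ.filter (fun i : Fin M => (i : ℕ) < k), x i ≤
      ∑ i ∈ univ.filter (fun i : Fin M => (i : ℕ) < k), y i) ∧
    ∑ i, x i = ∑ i, y i

/-- The multinomial coefficient `Q_n = N! / ∏ i (n i)!`. -/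
def Q {M : ℕ} (N : ℕ) (n : Fin M → ℕ) : ℕ :=
  Nat.factorial N / ∏ i, Nat.factorial (n i)

open Nat

section UnitTransfer

variable {ι : Type*} [DecidableEq ι]

def unitTransfer (x : ι → ℕ) (i j : ι) : ι → ℕ :=
  Function.update (Function.update x i (x i - 1)) j (x j + 1)

variable {x : ι → ℕ} {i j : ι}

lemma unitTransfer_add_single (hij : i ≠ j) (hi : 0 < x i) :
    unitTransfer x i j + Pi.single i 1 = x + Pi.single j 1 := by
  funext l
  rcases eq_or_ne l j with rfl | hlj
  · simp [unitTransfer, hij]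
  rcases eq_or_ne l i with rfl | hli
  · simp [unitTransfer, hlj]
    omega
  · simp [unitTransfer, hli, hlj]

lemma factorial_unitTransfer_mul_mulSingle (hij : i ≠ j) (hi : 0 < x i) (l : ι) :
    (unitTransfer x i j l)! * (Pi.mulSingle i (x i) : ι → ℕ) l =
      (x l)! * (Pi.mulSingle j (x j + 1) : ι → ℕ) l := by
  rcases eq_or_ne l j with rfl | hlj
  · simp [unitTransfer, hij, Nat.factorial_succ, mul_comm]
  rcases eq_or_ne l i with rfl | hli
  · simp [unitTransfer, hlj, mul_comm _ (x l), mul_factorial_pred hi.ne']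
  · simp [unitTransfer, hli, hlj]

variable [Fintype ι]

lemma prod_factorial_unitTransfer_mul (hij : i ≠ j) (hi : 0 < x i) :
    (∏ l, (unitTransfer x i j l)!) * x i = (∏ l, (x l)!) * (x j + 1) := by
  simpa only [prod_mul_distrib, Fintype.prod_pi_mulSingle'] using
    Fintype.prod_congr _ _ (factorial_unitTransfer_mul_mulSingle hij hi)

lemma prod_factorial_unitTransfer_lt (hij : i ≠ j) (h : x j + 1 < x i) :
    ∏ l, (unitTransfer x i j l)! < ∏ l, (x l)! := by
  have hmul := prod_factorial_unitTransfer_mul hij (x := x) (by omega)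
  have hpos : 0 < ∏ l, (x l)! := prod_pos fun l _ => factorial_pos _
  nlinarith

end UnitTransfer

section PartialSum

variable {M : ℕ}

def partialSum (x : Fin M → ℕ) (k : ℕ) : ℕ :=
  ∑ i ∈ univ.filter (fun i : Fin M => (i : ℕ) < k), x i

lemma partialSum_succ (x : Fin M → ℕ) {k : ℕ} (hk : k < M) :
    partialSum x (k + 1) = partialSum x k + x ⟨k, hk⟩ := by
  have : univ.filter (fun i : Fin M => (i : ℕ) < k + 1) =
      insert ⟨k, hk⟩ (univ.filter (fun i : Fin M => (i : ℕ) < k)) := by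
    ext i
    simp [Fin.ext_iff]
    omega
  rw [partialSum, this, sum_insert (by simp), add_comm]
  rfl

lemma partialSum_of_le (x : Fin M → ℕ) {k : ℕ} (hk : M ≤ k) : partialSum x k = ∑ i, x i :=
  sum_congr (filter_true_of_mem fun (i : Fin M) _ => i.isLt.trans_le hk) fun _ _ => rfl

lemma partialSum_single (i : Fin M) (k : ℕ) :
    partialSum (Pi.single i 1) k = if (i : ℕ) < k then 1 else 0 := by
  simp [partialSum, sum_pi_single']

lemma partialSum_unitTransfer {x : Fin M → ℕ} {i j : Fin M} (hij : i ≠ j) (hi : 0 < x i)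
    (k : ℕ) :
    partialSum (unitTransfer x i j) k + (if (i : ℕ) < k then 1 else 0) =
      partialSum x k + (if (j : ℕ) < k then 1 else 0) := by
  simp only [← partialSum_single, partialSum, ← sum_add_distrib]
  exact sum_congr rfl fun l _ => congrFun (unitTransfer_add_single hij hi) l

end PartialSum

namespace Maj

variable {M : ℕ} {n m : Fin M → ℕ}

lemma partialSum_le (h : Maj n m) (k : ℕ) : partialSum n k ≤ partialSum m k := by
  rcases lt_or_ge k M with hk | hk
  · exact h.1 k hk
  · rw [partialSum_of_le n hk, partialSum_of_le m hk, h.2]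

lemma exists_apply_lt (h : Maj n m) (hne : n ≠ m) : ∃ j, m j < n j := by
  by_contra! hle
  exact hne <| funext fun l => (sum_eq_sum_iff_of_le fun l _ => hle l).1 h.2 l (mem_univ l)

lemma exists_gap (h : Maj n m) (hne : n ≠ m) :
    ∃ i j : Fin M, i < j ∧ n i < m i ∧ m j < n j ∧
      ∀ k : ℕ, (i : ℕ) < k → k ≤ j → partialSum n k < partialSum m k := by
  obtain ⟨j, hj, hjmin⟩ := exists_minimal_of_wellFoundedLT _ (h.exists_apply_lt hne)
  have hbelow : ∀ l < j, n l ≤ m l := fun l hl =>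
    not_lt.1 fun hlt => (hjmin hlt hl.le).not_gt hl
  have hdeficit : partialSum n j < partialSum m j := by
    have := h.partialSum_le (j + 1)
    rw [partialSum_succ n j.isLt, partialSum_succ m j.isLt, Fin.eta] at this
    omega
  obtain ⟨i, hi, hni⟩ := exists_lt_of_sum_lt hdeficit
  have hij : i < j := by simpa using hi
  refine ⟨i, j, hij, hni, hj, fun k hik hkj => sum_lt_sum (fun l hl => hbelow l ?_) ⟨i, ?_, hni⟩⟩
  · simp only [mem_filter, mem_univ, true_and] at hl
    exact Fin.lt_def.2 (by omega)
  · simpa using hik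

lemma unitTransfer_right (h : Maj n m) {i j : Fin M} (hij : i < j) (hi : 0 < m i)
    (hgap : ∀ k : ℕ, (i : ℕ) < k → k ≤ j → partialSum n k < partialSum m k) :
    Maj n (unitTransfer m i j) := by
  have htransfer := partialSum_unitTransfer hij.ne hi
  have hij' : (i : ℕ) < j := hij
  refine ⟨fun k _ => show partialSum n k ≤ partialSum (unitTransfer m i j) k from ?_, ?_⟩
  · have hle := h.partialSum_le k
    have hk := htransfer k
    by_cases hik : (i : ℕ) < k <;> by_cases hjk : (j : ℕ) < k <;>
      simp only [hik, hjk, if_true, if_false] at hk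
    · omega
    · linarith [hgap k hik (not_lt.1 hjk)]
    · omega
    · omega
  · have hM := htransfer M
    simp only [partialSum_of_le _ le_rfl, i.isLt, j.isLt, if_true] at hM
    rw [h.2]
    omega

lemma exists_unitTransfer (hn : Antitone n) (h : Maj n m) (hne : n ≠ m) :
    ∃ i j, i ≠ j ∧ m j + 1 < m i ∧ Maj n (unitTransfer m i j) := by
  obtain ⟨i, j, hij, hni, hmj, hgap⟩ := h.exists_gap hne
  have hnji := hn hij.le
  exact ⟨i, j, hij.ne, by omega, h.unitTransfer_right hij (by omega) hgap⟩

theorem prod_factorial_lt (hn : Antitone n) (h : Maj n m) (hne : n ≠ m) :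
    ∏ i, (n i)! < ∏ i, (m i)! := by
  induction hP : ∏ i, (m i)! using Nat.strong_induction_on generalizing m with
  | _ P ih =>
  obtain ⟨i, j, hij, hlt, hmaj⟩ := h.exists_unitTransfer hn hne
  have hdec := prod_factorial_unitTransfer_lt hij hlt
  rw [hP] at hdec
  by_cases heq : n = unitTransfer m i j
  · rwa [heq]
  · exact (ih _ hdec hmaj heq rfl).trans hdec

end Maj

theorem multinomial_strict_schur_concave_general {M N : ℕ} (n m : Fin M → ℕ)
    (hn : Antitone n)
    (hns : ∑ i, n i = N) (hms : ∑ i, m i = N)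
    (hmaj : Maj n m)
    (hperm : ¬ ∃ σ : Equiv.Perm (Fin M), ∀ i, n i = m (σ i)) :
    Q N n > Q N m := by
  have hne : n ≠ m := fun h => hperm ⟨1, fun i => by simp [h]⟩
  have hdvd (x : Fin M → ℕ) (hx : ∑ i, x i = N) : ∏ i, (x i)! ∣ N ! :=
    hx ▸ prod_factorial_dvd_factorial_sum univ x
  exact (Nat.div_lt_div_left (factorial_ne_zero N) (hdvd m hms) (hdvd n hns)).2
    (hmaj.prod_factorial_lt hn hne)

theorem multinomial_strict_schur_concave {M N : ℕ} (n m : Fin M → ℕ)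
    (hn : Antitone n) (hm : Antitone m)
    (hns : ∑ i, n i = N) (hms : ∑ i, m i = N)
    (hmaj : Maj n m)
    (hperm : ¬ ∃ σ : Equiv.Perm (Fin M), ∀ i, n i = m (σ i)) :
    Q N n > Q N m :=
  multinomial_strict_schur_concave_general n m hn hns hms hmaj hperm
end

section
/- If n ≺ m are two nonincreasing vectors of nonnegative integers with equal sum N, then ∏_{i=1}^M (n_i!) ≤ ∏_{i=1}^M (m_i!), i.e., the product of factorials is Schur-convex on integer vectors. -/
open Finset

/-- Extension of a `Fin M`-vector to `ℕ` by zeros. -/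
def extN (M : ℕ) (x : Fin M → ℕ) : ℕ → ℕ :=
  fun t => if h : t < M then x ⟨t, h⟩ else 0

lemma extN_apply_lt (M : ℕ) (x : Fin M → ℕ) (i : Fin M) :
    extN M x (i : ℕ) = x i := by
  simp [extN, i.isLt]

lemma extN_apply_ge (M : ℕ) (x : Fin M → ℕ) (t : ℕ) (ht : M ≤ t) :
    extN M x t = 0 := by
  simp [extN, Nat.not_lt.2 ht]

lemma extN_antitone (M : ℕ) (x : Fin M → ℕ) (hx : Antitone x) :
    Antitone (extN M x) := by
  intro a b hab
  by_cases hb : b < M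
  · have ha : a < M := lt_of_le_of_lt hab hb
    simp only [extN, dif_pos ha, dif_pos hb]
    exact hx (show (⟨a, ha⟩ : Fin M) ≤ ⟨b, hb⟩ from hab)
  · simp only [extN, dif_neg hb]
    exact Nat.zero_le _

lemma extN_sum_range (M : ℕ) (x : Fin M → ℕ) (k : ℕ) (hk : M ≤ k) :
    ∑ i ∈ range k, extN M x i = ∑ i ∈ range M, extN M x i := by
  refine (Finset.sum_subset (Finset.range_subset_range.2 hk) ?_).symm
  intro i _ hi
  exact extN_apply_ge M x i (by simpa using hi)

lemma extN_sum_univ (M : ℕ) (x : Fin M → ℕ) :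
    ∑ i, x i = ∑ i ∈ range M, extN M x i := by
  rw [← Fin.sum_univ_eq_sum_range (extN M x) M]
  exact Finset.sum_congr rfl fun i _ => (extN_apply_lt M x i).symm

lemma extN_sum_filter (M : ℕ) (x : Fin M → ℕ) (k : ℕ) :
    ∑ i ∈ univ.filter (fun i : Fin M => (i : ℕ) < k), x i
      = ∑ i ∈ range k, extN M x i := by
  rw [Finset.sum_filter]
  have h1 : ∑ i : Fin M, (if (i : ℕ) < k then x i else 0)
      = ∑ i ∈ range M, (if i < k then extN M x i else 0) := by
    rw [← Fin.sum_univ_eq_sum_range (fun t => if t < k then extN M x t else 0) M]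
    exact Finset.sum_congr rfl fun i _ => by rw [extN_apply_lt]
  rw [h1]
  have h2 : ∑ i ∈ range M, (if i < k then extN M x i else 0)
      = ∑ i ∈ range (max M k), (if i < k then extN M x i else 0) := by
    refine Finset.sum_subset (Finset.range_subset_range.2 (le_max_left _ _)) ?_
    intro i _ hi
    have : M ≤ i := by simpa using hi
    simp [extN_apply_ge M x i this]
  have h3 : ∑ i ∈ range k, extN M x i
      = ∑ i ∈ range (max M k), (if i < k then extN M x i else 0) := by
    rw [show (∑ i ∈ range k, extN M x i)
        = ∑ i ∈ range k, (if i < k then extN M x i else 0) from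
      Finset.sum_congr rfl fun i hi => by simp [Finset.mem_range.1 hi]]
    refine Finset.sum_subset (Finset.range_subset_range.2 (le_max_right _ _)) ?_
    intro i _ hi
    have : k ≤ i := by simpa using hi
    simp [Nat.not_lt.2 this]
  rw [h2, ← h3]

/-- The key transfer induction, phrased for `ℕ`-indexed functions supported on `[0, M)`. -/
lemma key_lemma (M : ℕ) (g : ℕ → ℕ) (hg : Antitone g) (hgs : ∀ t, M ≤ t → g t = 0) :
    ∀ d : ℕ, ∀ f : ℕ → ℕ, Antitone f → (∀ t, M ≤ t → f t = 0) →
    (∀ k, ∑ i ∈ range k, f i ≤ ∑ i ∈ range k, g i) →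
    (∑ i ∈ range M, f i = ∑ i ∈ range M, g i) →
    (∑ k ∈ range M, (∑ i ∈ range k, g i - ∑ i ∈ range k, f i)) ≤ d →
    ∏ i ∈ range M, Nat.factorial (f i) ≤ ∏ i ∈ range M, Nat.factorial (g i) := by
  intro d
  induction d with
  | zero =>
    intro f hf hfs hpre htot hd
    -- measure is 0, so all prefix sums agree, hence f = g on range M
    have hterm : ∀ k, k < M → ∑ i ∈ range k, f i = ∑ i ∈ range k, g i := by
      intro k hk
      have h0 : ∑ k ∈ range M, (∑ i ∈ range k, g i - ∑ i ∈ range k, f i) = 0 :=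
        Nat.le_zero.1 hd
      have := (Finset.sum_eq_zero_iff.1 h0) k (Finset.mem_range.2 hk)
      have h2 := hpre k
      omega
    have heq : ∀ t, t < M → f t = g t := by
      intro t ht
      have h1 : ∑ i ∈ range (t + 1), f i = ∑ i ∈ range t, f i + f t :=
        Finset.sum_range_succ f t
      have h2 : ∑ i ∈ range (t + 1), g i = ∑ i ∈ range t, g i + g t :=
        Finset.sum_range_succ g t
      have h3 := hterm t (by omega)
      by_cases h4 : t + 1 < M
      · have := hterm (t + 1) h4
        omega
      · have ht1 : t + 1 = M := by omega
        rw [ht1] at h1 h2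
        omega
    exact le_of_eq (Finset.prod_congr rfl fun t ht =>
      by rw [heq t (Finset.mem_range.1 ht)])
  | succ e ih =>
    intro f hf hfs hpre htot hd
    by_cases hfg : ∀ t, t < M → f t = g t
    · exact le_of_eq (Finset.prod_congr rfl fun t ht =>
        by rw [hfg t (Finset.mem_range.1 ht)])
    -- i : least index where f and g differ; there f i < g i
    have hex_i : ∃ t, f t ≠ g t := by
      push_neg at hfg
      obtain ⟨t, _, ht⟩ := hfg
      exact ⟨t, ht⟩
    set i := Nat.find hex_i with hi_def
    have hi_ne : f i ≠ g i := Nat.find_spec hex_i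
    have hi_min : ∀ t, t < i → f t = g t := fun t ht => by
      have := Nat.find_min hex_i ht
      omega
    have hiM : i < M := by
      by_contra h
      exact hi_ne (by rw [hfs i (by omega), hgs i (by omega)])
    have hi_lt : f i < g i := by
      have hSi : ∑ t ∈ range i, f t = ∑ t ∈ range i, g t :=
        Finset.sum_congr rfl fun t ht => hi_min t (Finset.mem_range.1 ht)
      have h1 : ∑ t ∈ range (i + 1), f t = ∑ t ∈ range i, f t + f i :=
        Finset.sum_range_succ f i
      have h2 : ∑ t ∈ range (i + 1), g t = ∑ t ∈ range i, g t + g i :=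
        Finset.sum_range_succ g i
      have h3 := hpre (i + 1)
      omega
    -- j : least index where f j > g j
    have hex_j : ∃ t, g t < f t := by
      by_contra h
      push_neg at h
      have : ∑ t ∈ range M, f t < ∑ t ∈ range M, g t :=
        Finset.sum_lt_sum (fun t _ => h t) ⟨i, Finset.mem_range.2 hiM, hi_lt⟩
      omega
    set j := Nat.find hex_j with hj_def
    have hj_lt : g j < f j := Nat.find_spec hex_j
    have hj_min : ∀ t, t < j → f t ≤ g t := fun t ht => by
      have := Nat.find_min hex_j ht
      omega
    have hij : i < j := by
      rcases lt_trichotomy i j with h | h | h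
      · exact h
      · exfalso; rw [h] at hi_lt; omega
      · exact absurd (hi_min j h) (by omega)
    have hjM : j < M := by
      by_contra h
      have := hfs j (by omega)
      omega
    -- j' : end of the block of f-values equal to f j
    have hex_c : ∃ c, f (j + c + 1) < f j := by
      refine ⟨M, ?_⟩
      rw [hfs (j + M + 1) (by omega)]
      omega
    set c := Nat.find hex_c with hc_def
    set j' := j + c with hj'_def
    have hj'1 : f (j' + 1) < f j := Nat.find_spec hex_c
    have hblock : ∀ s, j ≤ s → s ≤ j' → f s = f j := by
      intro s hs1 hs2
      rcases Nat.eq_or_lt_of_le hs1 with h | h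
      · rw [← h]
      · have hcb : s - j - 1 < c := by omega
        have := Nat.find_min hex_c hcb
        have hs' : j + (s - j - 1) + 1 = s := by omega
        rw [hs'] at this
        have := hf (show j ≤ s by omega)
        omega
    have hfj' : f j' = f j := hblock j' (by omega) le_rfl
    have hj'M : j' < M := by
      by_contra h
      have := hfs j' (by omega)
      omega
    have hij' : i < j' := by omega
    have hfj_pos : 1 ≤ f j := by omega
    have hfji : f j ≤ f i := by rw [← hfj']; exact hf (le_of_lt hij')
    -- the transferred vector
    set f' : ℕ → ℕ := fun t => if t = i then f i + 1 else if t = j' then f j - 1 else f t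
      with hf'_def
    have hf'i : f' i = f i + 1 := by simp [hf'_def]
    have hf'j' : f' j' = f j - 1 := by
      simp only [hf'_def]
      rw [if_neg (show j' ≠ i by omega)]
      simp
    have hf'other : ∀ t, t ≠ i → t ≠ j' → f' t = f t := by
      intro t h1 h2
      simp only [hf'_def]
      rw [if_neg h1, if_neg h2]
    -- prefix sums of f'
    have hS' : ∀ k, (∑ t ∈ range k, f' t) + (if j' < k then 1 else 0)
        = (∑ t ∈ range k, f t) + (if i < k then 1 else 0) := by
      intro k
      induction k with
      | zero => simp
      | succ k ihk =>
        rw [Finset.sum_range_succ, Finset.sum_range_succ]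
        have hterm : f' k + (if k = j' then 1 else 0) = f k + (if k = i then 1 else 0) := by
          have B1 : k = i → f' k = f i + 1 := fun h => by rw [h, hf'i]
          have B2 : k = j' → f' k = f j - 1 := fun h => by rw [h, hf'j']
          have B3 : k = i → f k = f i := fun h => by rw [h]
          have B4 : k = j' → f k = f j := fun h => by rw [h, ← hfj']
          have B5 : k ≠ i → k ≠ j' → f' k = f k := hf'other k
          split_ifs with h1 h2 <;> omega
        split_ifs at hterm ihk ⊢ <;> omega
    -- the key strict inequality on the interior prefix sums
    have hkey : ∀ k, i < k → k ≤ j' → ∑ t ∈ range k, f t < ∑ t ∈ range k, g t := by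
      intro k hk1 hk2
      by_cases hkj : k ≤ j
      · -- direct: f ≤ g pointwise on [i+1, k), strict gap already at i+1
        have hstep : ∑ t ∈ range (i + 1), f t < ∑ t ∈ range (i + 1), g t := by
          have h1 := Finset.sum_range_succ f i
          have h2 := Finset.sum_range_succ g i
          have h3 := hpre i
          omega
        have hsplit : ∀ h : ℕ → ℕ, ∑ t ∈ range (i + 1), h t + ∑ t ∈ Finset.Ico (i + 1) k, h t
            = ∑ t ∈ range k, h t := by
          intro h
          simp only [Finset.range_eq_Ico]
          exact Finset.sum_Ico_consecutive h (Nat.zero_le _) (by omega)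
        have hsplitf := (hsplit f).symm
        have hsplitg := (hsplit g).symm
        have hico : ∑ t ∈ Finset.Ico (i + 1) k, f t ≤ ∑ t ∈ Finset.Ico (i + 1) k, g t := by
          refine Finset.sum_le_sum fun t ht => ?_
          have := Finset.mem_Ico.1 ht
          exact hj_min t (by omega)
        omega
      · -- contradiction: an equality here would force a violation one step later
        by_contra hcon
        have heq : ∑ t ∈ range k, f t = ∑ t ∈ range k, g t := by
          have := hpre k
          omega
        have hfk : f k = f j := hblock k (by omega) hk2
        have hgk : g k ≤ g j := hg (by omega)
        have h1 := Finset.sum_range_succ f k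
        have h2 := Finset.sum_range_succ g k
        have h3 := hpre (k + 1)
        omega
    -- f' is antitone
    have hf'anti : Antitone f' := by
      apply antitone_nat_of_succ_le
      intro t
      have A1 : f (t + 1) ≤ f t := hf (Nat.le_succ t)
      have A2 : t < i → g i ≤ f t := fun h => by
        rw [hi_min t h]; exact hg (le_of_lt h)
      have A6 : t = j' → f (t + 1) < f j := fun h => by rw [h]; exact hj'1
      have A7 : t ≤ j' → f j ≤ f t := fun h => by
        rw [← hfj']; exact hf h
      have A9 : t = i → f (t + 1) ≤ f i := fun h => by rw [h] at A1 ⊢; exact A1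
      simp only [hf'_def]
      split_ifs <;> omega
    -- support of f'
    have hf's : ∀ t, M ≤ t → f' t = 0 := by
      intro t ht
      rw [hf'other t (by omega) (by omega)]
      exact hfs t ht
    -- prefix domination for f'
    have hpre' : ∀ k, ∑ t ∈ range k, f' t ≤ ∑ t ∈ range k, g t := by
      intro k
      have h1 := hS' k
      have h2 := hpre k
      have h3 := hkey k
      split_ifs at h1 <;> omega
    -- total sum of f'
    have htot' : ∑ t ∈ range M, f' t = ∑ t ∈ range M, g t := by
      have h1 := hS' M
      split_ifs at h1 <;> omega
    -- measure decreases
    have hmeas : ∑ k ∈ range M, (∑ t ∈ range k, g t - ∑ t ∈ range k, f' t)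
        < ∑ k ∈ range M, (∑ t ∈ range k, g t - ∑ t ∈ range k, f t) := by
      refine Finset.sum_lt_sum (fun k _ => ?_) ⟨j', Finset.mem_range.2 hj'M, ?_⟩
      · have h1 := hS' k
        split_ifs at h1 <;> omega
      · have h1 := hS' j'
        have h2 := hkey j' hij' le_rfl
        split_ifs at h1 <;> omega
    -- product inequality for the single transfer
    have hprod : ∏ t ∈ range M, Nat.factorial (f t) ≤ ∏ t ∈ range M, Nat.factorial (f' t) := by
      have hiMem : i ∈ range M := Finset.mem_range.2 hiM
      have hj'Mem : j' ∈ (range M).erase i :=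
        Finset.mem_erase.2 ⟨by omega, Finset.mem_range.2 hj'M⟩
      have hsplit : ∀ h : ℕ → ℕ, ∏ t ∈ range M, Nat.factorial (h t)
          = Nat.factorial (h i) * (Nat.factorial (h j') *
            ∏ t ∈ ((range M).erase i).erase j', Nat.factorial (h t)) := by
        intro h
        have e1 : Nat.factorial (h i) * ∏ x ∈ (range M).erase i, Nat.factorial (h x)
            = ∏ x ∈ range M, Nat.factorial (h x) :=
          Finset.mul_prod_erase _ (fun t => Nat.factorial (h t)) hiMem
        have e2 : Nat.factorial (h j') * ∏ x ∈ ((range M).erase i).erase j', Nat.factorial (h x)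
            = ∏ x ∈ (range M).erase i, Nat.factorial (h x) :=
          Finset.mul_prod_erase _ (fun t => Nat.factorial (h t)) hj'Mem
        rw [← e1, ← e2]
      have split_f := hsplit f
      have split_f' := hsplit f'
      have hcongr : ∏ t ∈ ((range M).erase i).erase j', Nat.factorial (f' t)
          = ∏ t ∈ ((range M).erase i).erase j', Nat.factorial (f t) := by
        refine Finset.prod_congr rfl fun t ht => ?_
        have h1 := Finset.mem_erase.1 ht
        have h2 := Finset.mem_erase.1 h1.2
        rw [hf'other t h2.1 h1.1]
      rw [split_f, split_f', hcongr, hf'i, hf'j']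
      have hfac : Nat.factorial (f i) * Nat.factorial (f j')
          ≤ Nat.factorial (f i + 1) * Nat.factorial (f j - 1) := by
        rw [hfj']
        have e1 : Nat.factorial (f i + 1) = (f i + 1) * Nat.factorial (f i) :=
          Nat.factorial_succ (f i)
        have e2 : Nat.factorial (f j) = f j * Nat.factorial (f j - 1) := by
          conv_lhs => rw [show f j = (f j - 1) + 1 by omega]
          rw [Nat.factorial_succ]
          congr 1
          omega
        rw [e1, e2]
        calc Nat.factorial (f i) * (f j * Nat.factorial (f j - 1))
            = f j * (Nat.factorial (f i) * Nat.factorial (f j - 1)) := by ring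
          _ ≤ (f i + 1) * (Nat.factorial (f i) * Nat.factorial (f j - 1)) :=
              Nat.mul_le_mul_right _ (by omega)
          _ = (f i + 1) * Nat.factorial (f i) * Nat.factorial (f j - 1) := by ring
      calc Nat.factorial (f i) * (Nat.factorial (f j') *
            ∏ t ∈ ((range M).erase i).erase j', Nat.factorial (f t))
          = (Nat.factorial (f i) * Nat.factorial (f j')) *
            ∏ t ∈ ((range M).erase i).erase j', Nat.factorial (f t) := by ring
        _ ≤ (Nat.factorial (f i + 1) * Nat.factorial (f j - 1)) *
            ∏ t ∈ ((range M).erase i).erase j', Nat.factorial (f t) :=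
            Nat.mul_le_mul_right _ hfac
        _ = Nat.factorial (f i + 1) * (Nat.factorial (f j - 1) *
            ∏ t ∈ ((range M).erase i).erase j', Nat.factorial (f t)) := by ring
    exact le_trans hprod (ih f' hf'anti hf's hpre' htot' (by omega))

theorem prod_factorial_schur_convex {M N : ℕ} (n m : Fin M → ℕ)
    (hn : Antitone n) (hm : Antitone m)
    (hns : ∑ i, n i = N) (hms : ∑ i, m i = N)
    (hmaj : Maj n m) :
    ∏ i, Nat.factorial (n i) ≤ ∏ i, Nat.factorial (m i) := by
  have hprodn : ∏ i, Nat.factorial (n i) = ∏ i ∈ range M, Nat.factorial (extN M n i) := by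
    rw [← Fin.prod_univ_eq_prod_range (fun t => Nat.factorial (extN M n t)) M]
    exact Finset.prod_congr rfl fun i _ => by rw [extN_apply_lt]
  have hprodm : ∏ i, Nat.factorial (m i) = ∏ i ∈ range M, Nat.factorial (extN M m i) := by
    rw [← Fin.prod_univ_eq_prod_range (fun t => Nat.factorial (extN M m t)) M]
    exact Finset.prod_congr rfl fun i _ => by rw [extN_apply_lt]
  rw [hprodn, hprodm]
  have htotn : ∑ i ∈ range M, extN M n i = N := by rw [← extN_sum_univ]; exact hns
  have htotm : ∑ i ∈ range M, extN M m i = N := by rw [← extN_sum_univ]; exact hms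
  refine key_lemma M (extN M m) (extN_antitone M m hm) (extN_apply_ge M m)
    (∑ k ∈ range M, (∑ i ∈ range k, extN M m i - ∑ i ∈ range k, extN M n i))
    (extN M n) (extN_antitone M n hn) (extN_apply_ge M n) ?_ (by omega) le_rfl
  intro k
  by_cases hk : k < M
  · have := hmaj.1 k hk
    rwa [extN_sum_filter, extN_sum_filter] at this
  · rw [extN_sum_range M n k (by omega), extN_sum_range M m k (by omega)]
    omega
end

section
/- The function v_n = ∏_{i=1}^M √(n_i! / n_i^{n_i}) (with the convention 0^0 = 1) is Schur-concave on vectors of nonnegative integers: if n ≺ m with equal sums, then v_n ≥ v_m. -/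
open Finset

/-- `v_n = ∏ i √(n_i! / n_i^{n_i})` (for `n i = 0` the factor is `√(1/1) = 1`,
using the convention `0^0 = 1`). -/
noncomputable def v {M : ℕ} (n : Fin M → ℕ) : ℝ :=
  ∏ i, Real.sqrt ((Nat.factorial (n i) : ℝ) / (n i : ℝ) ^ (n i))

/-!
`k ↦ log (k! / k^k)` is concave on `ℕ`: its forward difference `-k log (1 + 1/k)` is antitone
because `(1 + 1/k)^k` increases (Bernoulli's inequality). For a concave `g` and antitone `n`, the
tangent bounds `g (m i) ≤ g (n i) + Δg (n i) (m i - n i)` have slopes `Δg (n i)` increasing in `i`,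
and Abel summation against the nonnegative partial sums of `m - n` shows `∑ g (m i) ≤ ∑ g (n i)`.
-/

open fwdDiff
open scoped Nat

section DiscreteConcavity

variable {R : Type*} [CommRing R] [LinearOrder R] [IsStrictOrderedRing R]

theorem le_add_fwdDiff_mul_sub {g : ℕ → R} (hg : Antitone (Δ_[1] g)) (a b : ℕ) :
    g b ≤ g a + Δ_[1] g a * ((b : R) - a) := by
  have above : ∀ d : ℕ, g (a + d) ≤ g a + d * Δ_[1] g a := by
    intro d
    induction d with
    | zero => simp
    | succ d ih =>
      have step : Δ_[1] g (a + d) = g (a + d + 1) - g (a + d) := rfl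
      have := hg (Nat.le_add_right a d)
      push_cast
      rw [← add_assoc]
      linarith
  have below : ∀ d : ℕ, g b + d * Δ_[1] g (b + d) ≤ g (b + d) := by
    intro d
    induction d with
    | zero => simp
    | succ d ih =>
      have step : Δ_[1] g (b + d) = g (b + d + 1) - g (b + d) := rfl
      have := mul_le_mul_of_nonneg_left (hg (Nat.le_add_right (b + d) 1))
        (Nat.cast_nonneg (α := R) (d + 1))
      push_cast at this ⊢
      rw [← add_assoc]
      linarith
  rcases le_total a b with hab | hba
  · obtain ⟨d, rfl⟩ := Nat.exists_eq_add_of_le hab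
    push_cast
    linarith [above d]
  · obtain ⟨d, rfl⟩ := Nat.exists_eq_add_of_le hba
    push_cast
    linarith [below d]

theorem sum_range_mul_nonpos_of_monotone {lam c : ℕ → R} {M : ℕ} (hlam : Monotone lam)
    (hc : ∀ k < M, 0 ≤ ∑ j ∈ range k, c j) (hcM : ∑ j ∈ range M, c j = 0) :
    ∑ j ∈ range M, lam j * c j ≤ 0 := by
  have parts := sum_range_by_parts lam c M
  simp only [smul_eq_mul] at parts
  rw [parts, hcM, mul_zero, zero_sub, neg_nonpos]
  refine sum_nonneg fun i hi => mul_nonneg ?_ (hc (i + 1) ?_)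
  · exact sub_nonneg.mpr (hlam (Nat.le_succ i))
  · have := mem_range.mp hi
    omega

theorem sum_range_comp_le_of_majorized {g : ℕ → R} (hg : Antitone (Δ_[1] g))
    {x y : ℕ → ℕ} {M : ℕ} (hx : Antitone x)
    (hxy : ∀ k < M, ∑ j ∈ range k, x j ≤ ∑ j ∈ range k, y j)
    (htot : ∑ j ∈ range M, x j = ∑ j ∈ range M, y j) :
    ∑ j ∈ range M, g (y j) ≤ ∑ j ∈ range M, g (x j) := by
  have hc : ∀ k, ∑ j ∈ range k, ((y j : R) - x j) = ((∑ j ∈ range k, y j : ℕ) : R) -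
      ((∑ j ∈ range k, x j : ℕ) : R) := by
    intro k
    push_cast
    exact sum_sub_distrib _ _
  have abel : ∑ j ∈ range M, Δ_[1] g (x j) * ((y j : R) - x j) ≤ 0 := by
    refine sum_range_mul_nonpos_of_monotone (hg.comp hx) (fun k hk => ?_) ?_
    · rw [hc, sub_nonneg]
      exact_mod_cast hxy k hk
    · rw [hc, htot, sub_self]
  have tangent : ∑ j ∈ range M, (g (y j) - g (x j)) ≤
      ∑ j ∈ range M, Δ_[1] g (x j) * ((y j : R) - x j) :=
    sum_le_sum fun j _ => sub_le_iff_le_add'.mpr (le_add_fwdDiff_mul_sub hg (x j) (y j))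
  rw [sum_sub_distrib] at tangent
  linarith

end DiscreteConcavity

section ZeroExtend

variable {M : ℕ}

-- Extending by zero keeps antitone vectors antitone, so Abel summation on `ℕ` applies.
def zeroExtend (x : Fin M → ℕ) (j : ℕ) : ℕ := if h : j < M then x ⟨j, h⟩ else 0

@[simp]
theorem zeroExtend_val (x : Fin M → ℕ) (i : Fin M) : zeroExtend x i = x i := by
  simp [zeroExtend]

theorem Antitone.zeroExtend {x : Fin M → ℕ} (hx : Antitone x) : Antitone (zeroExtend x) := by
  intro i j hij
  unfold _root_.zeroExtend
  split_ifs with hj hi hi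
  · exact hx (Fin.mk_le_mk.mpr hij)
  · omega
  · exact Nat.zero_le _
  · exact le_rfl

theorem sum_comp_eq_sum_range_zeroExtend {α : Type*} [AddCommMonoid α] (x : Fin M → ℕ)
    (F : ℕ → α) : ∑ i, F (x i) = ∑ j ∈ range M, F (zeroExtend x j) := by
  simp [← Fin.sum_univ_eq_sum_range (fun j => F (zeroExtend x j))]

theorem sum_filter_lt_eq_sum_range_zeroExtend (x : Fin M → ℕ) {k : ℕ} (hk : k ≤ M) :
    ∑ i ∈ univ.filter (fun i : Fin M => (i : ℕ) < k), x i = ∑ j ∈ range k, zeroExtend x j := by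
  rw [sum_filter, show range k = (range M).filter (· < k) by ext; simp; omega, sum_filter,
    ← Fin.sum_univ_eq_sum_range]
  simp

end ZeroExtend

theorem Maj.sum_le_sum_of_antitone_fwdDiff {R : Type*} [CommRing R] [LinearOrder R]
    [IsStrictOrderedRing R] {M : ℕ} {x y : Fin M → ℕ} (hxy : Maj x y) (hx : Antitone x)
    {g : ℕ → R} (hg : Antitone (Δ_[1] g)) : ∑ i, g (y i) ≤ ∑ i, g (x i) := by
  rw [sum_comp_eq_sum_range_zeroExtend x, sum_comp_eq_sum_range_zeroExtend y]
  refine sum_range_comp_le_of_majorized hg hx.zeroExtend (fun k hk => ?_) ?_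
  · simpa only [sum_filter_lt_eq_sum_range_zeroExtend _ hk.le] using hxy.1 k hk
  · convert hxy.2 using 1 <;> exact (sum_comp_eq_sum_range_zeroExtend _ id).symm

noncomputable def logFactDivPow (k : ℕ) : ℝ := Real.log (k ! / (k : ℝ) ^ k)

theorem factorial_div_pow_self_pos (k : ℕ) : 0 < (k ! : ℝ) / (k : ℝ) ^ k :=
  div_pos (by positivity) (by exact_mod_cast Nat.pow_self_pos)

theorem fwdDiff_logFactDivPow (k : ℕ) :
    Δ_[1] logFactDivPow k = k * Real.log k - k * Real.log (k + 1) := by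
  have hpow : ∀ j : ℕ, (j : ℝ) ^ j ≠ 0 := fun j => by exact_mod_cast Nat.pow_self_pos.ne'
  simp only [fwdDiff, logFactDivPow]
  rw [Real.log_div (by positivity) (hpow _), Real.log_div (by positivity) (hpow _),
    Nat.factorial_succ, Nat.cast_mul, Real.log_mul (by positivity) (by positivity), Real.log_pow,
    Real.log_pow]
  push_cast
  ring

theorem add_one_pow_le_pow_mul_add_two_pow (k : ℕ) :
    ((k : ℝ) + 1) ^ (2 * k + 1) ≤ (k : ℝ) ^ k * (k + 2) ^ (k + 1) := by
  rcases k.eq_zero_or_pos with rfl | hk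
  · norm_num
  -- Bernoulli for `((k + 1)^2 - 1)^(k + 1)`; equivalently `(1 + 1/k)^k ≤ (1 + 1/(k + 1))^(k + 1)`.
  have bernoulli := pow_add_mul_le_add_pow (a := ((k : ℝ) + 1) ^ 2) (b := -1) (by positivity)
    (by nlinarith [(Nat.cast_nonneg k : (0 : ℝ) ≤ k)]) (k + 1)
  rw [show ((k : ℝ) + 1) ^ 2 + -1 = k * (k + 2) by ring, mul_pow, Nat.add_sub_cancel, ← pow_mul,
    ← pow_mul, Nat.cast_succ] at bernoulli
  have : (k : ℝ) * (k + 1) ^ (2 * k + 1) ≤ k * (k ^ k * (k + 2) ^ (k + 1)) :=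
    calc (k : ℝ) * (k + 1) ^ (2 * k + 1)
        = (k + 1) ^ (2 * (k + 1)) + (k + 1) * (k + 1) ^ (2 * k) * -1 := by ring
      _ ≤ k ^ (k + 1) * (k + 2) ^ (k + 1) := bernoulli
      _ = k * (k ^ k * (k + 2) ^ (k + 1)) := by ring
  exact le_of_mul_le_mul_left this (by positivity)

theorem antitone_fwdDiff_logFactDivPow : Antitone (Δ_[1] logFactDivPow) := by
  refine antitone_nat_of_succ_le fun k => ?_
  have hlog := Real.log_le_log (by positivity) (add_one_pow_le_pow_mul_add_two_pow k)
  rw [Real.log_pow, Real.log_mul (by exact_mod_cast ne_of_gt Nat.pow_self_pos) (by positivity),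
    Real.log_pow, Real.log_pow] at hlog
  rw [fwdDiff_logFactDivPow, fwdDiff_logFactDivPow]
  push_cast at hlog ⊢
  rw [show (k : ℝ) + 1 + 1 = k + 2 by ring]
  linarith

theorem v_pos {M : ℕ} (n : Fin M → ℕ) : 0 < v n :=
  prod_pos fun i _ => Real.sqrt_pos.mpr (factorial_div_pow_self_pos (n i))

theorem log_v {M : ℕ} (n : Fin M → ℕ) : Real.log (v n) = (∑ i, logFactDivPow (n i)) / 2 := by
  rw [v, Real.log_prod fun i _ => (Real.sqrt_pos.mpr (factorial_div_pow_self_pos (n i))).ne',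
    sum_div]
  exact sum_congr rfl fun i _ => Real.log_sqrt (factorial_div_pow_self_pos (n i)).le

theorem v_schur_concave_general {M : ℕ} (n m : Fin M → ℕ)
    (hn : Antitone n)
    (hmaj : Maj n m) :
    v n ≥ v m := by
  rw [ge_iff_le, ← Real.log_le_log_iff (v_pos m) (v_pos n), log_v, log_v]
  gcongr ?_ / _
  exact hmaj.sum_le_sum_of_antitone_fwdDiff hn antitone_fwdDiff_logFactDivPow

theorem v_schur_concave {M : ℕ} (n m : Fin M → ℕ)
    (hn : Antitone n) (hm : Antitone m)
    (hsum : ∑ i, n i = ∑ i, m i)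
    (hmaj : Maj n m) :
    v n ≥ v m :=
  v_schur_concave_general n m hn hmaj
end

section
/- Ryser's formula: for an N×N complex matrix U, Per(U) = (−1)^N ∑_{S ⊆ {1,...,N}} (−1)^{|S|} ∏_{j=1}^N (∑_{k ∈ S} U_{jk}). -/
/-!
Expanding `∏ i, ∑ j ∈ S, M i j` gives the sum of `∏ i, M i (x i)` over all maps `x` with values
in `S`. Inclusion–exclusion over the columns that `x` misses then leaves exactly the surjective
maps, which are the permutations; substituting `S ↦ Sᶜ` produces the sign `(-1) ^ N`.
-/

open Finset

/-- The permanent of an `N × N` complex matrix. -/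
noncomputable def perm {N : ℕ} (U : Matrix (Fin N) (Fin N) ℂ) : ℂ :=
  ∑ σ : Equiv.Perm (Fin N), ∏ i, U i (σ i)

section InclusionExclusion

variable {ι κ R : Type*} [Fintype ι] [DecidableEq ι] [Fintype κ] [DecidableEq κ] [CommRing R]

theorem sum_prod_surjective_eq_alternating_sum (g : ι → κ → R) :
    ∑ x : ι → κ with x.Surjective, ∏ i, g i (x i) =
      ∑ t : Finset κ, (-1) ^ #t * ∏ i, ∑ k ∈ tᶜ, g i k := by
  let missing (k : κ) : Finset (ι → κ) := {x | ∀ i, x i ≠ k}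
  have h_surj :
      (univ.inf fun k ↦ (missing k)ᶜ) = univ.filter fun x : ι → κ ↦ x.Surjective := by
    ext x
    simp only [missing, mem_inf, mem_compl, mem_filter, mem_univ, true_and, true_implies,
      not_forall, not_not]
    rfl
  have h_avoid (t : Finset κ) : t.inf missing = Fintype.piFinset fun _ ↦ tᶜ := by
    ext x
    simp only [missing, mem_inf, mem_filter, mem_univ, true_and, Fintype.mem_piFinset, mem_compl]
    exact ⟨fun h i hi ↦ h _ hi i rfl, fun h k hk i hi ↦ h i (hi ▸ hk)⟩
  rw [← h_surj, inclusion_exclusion_sum_inf_compl]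
  refine sum_congr rfl fun t _ ↦ ?_
  rw [h_avoid, sum_prod_piFinset, zsmul_eq_mul, Int.cast_pow, Int.cast_neg, Int.cast_one]

omit [Fintype ι] [DecidableEq ι] in
theorem neg_one_pow_card_compl (s : Finset κ) :
    (-1 : R) ^ #sᶜ = (-1) ^ Fintype.card κ * (-1) ^ #s := by
  rw [← card_compl_add_card s, pow_add, mul_assoc, ← pow_add, Even.neg_one_pow ⟨_, rfl⟩,
    mul_one]

end InclusionExclusion

theorem Equiv.Perm.sum_eq_sum_surjective {α M : Type*} [Fintype α] [DecidableEq α]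
    [AddCommMonoid M] (f : (α → α) → M) :
    ∑ σ : Equiv.Perm α, f σ = ∑ x : α → α with x.Surjective, f x := by
  refine sum_bij (fun σ _ ↦ ⇑σ) (fun σ _ ↦ by simpa using σ.surjective)
    (fun _ _ _ _ h ↦ Equiv.coe_fn_injective h) (fun x hx ↦ ?_) fun _ _ ↦ rfl
  have hx : x.Bijective := Finite.surjective_iff_bijective.mp (mem_filter.mp hx).2
  exact ⟨Equiv.ofBijective x hx, mem_univ _, rfl⟩

theorem Matrix.permanent_eq_ryser {n R : Type*} [Fintype n] [DecidableEq n]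
    [CommRing R] (M : Matrix n n R) :
    M.permanent = (-1) ^ Fintype.card n * ∑ S : Finset n, (-1) ^ #S * ∏ i, ∑ j ∈ S, M i j := by
  rw [← permanent_transpose, permanent]
  simp only [transpose_apply]
  rw [Equiv.Perm.sum_eq_sum_surjective (fun x ↦ ∏ i, M i (x i)),
    sum_prod_surjective_eq_alternating_sum (g := M), mul_sum]
  refine (Fintype.sum_bijective (·ᶜ) compl_involutive.bijective _ _ fun S ↦ ?_).symm
  rw [neg_one_pow_card_compl, compl_compl, mul_assoc]

/-- Ryser's formula: the permanent as an inclusion-exclusion sum over subsets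
of the column indices. -/
theorem ryser_formula {N : ℕ} (U : Matrix (Fin N) (Fin N) ℂ) :
    perm U = (-1 : ℂ) ^ N *
      ∑ S : Finset (Fin N), (-1 : ℂ) ^ S.card * ∏ j, (∑ k ∈ S, U j k) := by
  have h_perm : perm U = U.permanent := by
    rw [← U.permanent_transpose]
    rfl
  rw [h_perm, Matrix.permanent_eq_ryser, Fintype.card_fin]
end

section
/- Let n and m be nonincreasing nonnegative integer vectors of length M with equal sum N. If n ≺ m, then min(∏_i (n_i+1), ∏_j (m_j+1)) = ∏_j (m_j+1), i.e., ∏_j (m_j+1) ≤ ∏_i (n_i+1). -/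
open Finset

private lemma anti_of_adj (M : ℕ) (x : ℕ → ℕ) (h : ∀ t, t + 1 < M → x (t + 1) ≤ x t) :
    ∀ s t, s ≤ t → t < M → x t ≤ x s := by
  intro s t
  induction t with
  | zero => intro hst _; obtain rfl := Nat.le_zero.mp hst; exact le_rfl
  | succ t ih =>
    intro hst hM
    rcases Nat.eq_or_lt_of_le hst with rfl | h'
    · exact le_rfl
    · exact le_trans (h t hM) (ih (by omega) (by omega))

set_option maxHeartbeats 1000000 in
private lemma key (M : ℕ) (a : ℕ → ℕ)
    (ha : ∀ s t, s ≤ t → t < M → a t ≤ a s) :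
    ∀ D : ℕ, ∀ b : ℕ → ℕ,
      (∀ s t, s ≤ t → t < M → b t ≤ b s) →
      (∀ k, k ≤ M → ∑ t ∈ range k, a t ≤ ∑ t ∈ range k, b t) →
      (∑ t ∈ range M, a t = ∑ t ∈ range M, b t) →
      (∑ k ∈ range (M + 1), (∑ t ∈ range k, b t - ∑ t ∈ range k, a t) = D) →
      ∏ t ∈ range M, (b t + 1) ≤ ∏ t ∈ range M, (a t + 1) := by
  intro D
  induction D using Nat.strong_induction_on with
  | _ D ih =>
  intro b hb hle htot hD
  by_cases hne : ∃ k, k < M ∧ a k ≠ b k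
  swap
  · push_neg at hne
    exact le_of_eq (Finset.prod_congr rfl fun t ht => by
      rw [hne t (Finset.mem_range.mp ht)])
  -- main case
  set i0 := Nat.find hne with hi0def
  have hi0spec : i0 < M ∧ a i0 ≠ b i0 := Nat.find_spec hne
  have hi0M : i0 < M := hi0spec.1
  -- existence of an index where b < a
  have hj0ex : ∃ k, k < M ∧ b k < a k := by
    by_contra h
    push_neg at h
    have hlt : ∑ t ∈ range M, a t < ∑ t ∈ range M, b t := by
      apply Finset.sum_lt_sum
      · intro t ht
        by_contra hc
        push_neg at hc
        exact absurd (h t (Finset.mem_range.mp ht)) (by omega)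
      · refine ⟨i0, Finset.mem_range.mpr hi0M, ?_⟩
        have := h i0 hi0M
        omega
    omega
  set j0 := Nat.find hj0ex with hj0def
  have hj0spec : j0 < M ∧ b j0 < a j0 := Nat.find_spec hj0ex
  have hj0M : j0 < M := hj0spec.1
  have hi0j0 : i0 ≤ j0 := Nat.find_min' hne ⟨hj0M, by omega⟩
  -- before i0, a = b
  have heq : ∀ t, t < i0 → a t = b t := by
    intro t ht
    have := Nat.find_min hne ht
    simp only [not_and, not_not] at this
    exact this (by omega)
  -- a i0 < b i0
  have hi0lt : a i0 < b i0 := by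
    have h1 : ∑ t ∈ range i0, a t = ∑ t ∈ range i0, b t :=
      Finset.sum_congr rfl fun t ht => heq t (Finset.mem_range.mp ht)
    have h2 := hle (i0 + 1) (by omega)
    rw [Finset.sum_range_succ, Finset.sum_range_succ] at h2
    omega
  -- before j0, a ≤ b
  have hpos : ∀ t, t < j0 → a t ≤ b t := by
    intro t ht
    have := Nat.find_min hj0ex ht
    simp only [not_and, not_lt] at this
    exact this (by omega)
  -- strict partial-sum domination in the window
  have hwin : ∀ k, i0 < k → k ≤ j0 → ∑ t ∈ range k, a t + 1 ≤ ∑ t ∈ range k, b t := by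
    intro k hk1 hk2
    have : ∑ t ∈ range k, a t < ∑ t ∈ range k, b t := by
      apply Finset.sum_lt_sum
      · intro t ht
        exact hpos t (by have := Finset.mem_range.mp ht; omega)
      · exact ⟨i0, Finset.mem_range.mpr hk1, hi0lt⟩
    omega
  -- define i : last index of the block of value b i0
  have hcex : ∃ c, c = M ∨ b c < b i0 := ⟨M, Or.inl rfl⟩
  set c := Nat.find hcex with hcdef
  have hcspec : c = M ∨ b c < b i0 := Nat.find_spec hcex
  have hcM : c ≤ M := by
    rcases hcspec with h | h
    · omega
    · by_contra hc
      push_neg at hc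
      exact absurd (Nat.find_min' hcex (Or.inl rfl)) (by omega)
  have hc0 : 1 ≤ c := by
    rcases Nat.eq_zero_or_pos c with h | h
    · exfalso
      rcases hcspec with h2 | h2
      · omega
      · rw [h] at h2
        exact absurd (hb 0 i0 (Nat.zero_le _) hi0M) (by omega)
    · exact h
  set i := c - 1 with hidef
  have hic : i + 1 = c := by omega
  have hiM : i < M := by omega
  have hinotspec : ¬(i = M ∨ b i < b i0) := Nat.find_min hcex (by omega)
  have hbi0i : b i0 ≤ b i := by
    push_neg at hinotspec
    exact hinotspec.2
  have hi0i : i0 ≤ i := by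
    by_contra hc
    push_neg at hc
    have hcle : c ≤ i0 := by omega
    rcases hcspec with h | h
    · omega
    · exact absurd (hb c i0 hcle hi0M) (by omega)
  -- define j : first index of the block of value b j0
  have hjex : ∃ t, b t = b j0 := ⟨j0, rfl⟩
  set j := Nat.find hjex with hjdef
  have hjj0 : j ≤ j0 := Nat.find_min' hjex rfl
  have hbj : b j = b j0 := Nat.find_spec hjex
  have hjM : j < M := by omega
  have hBs : ∀ s, s < j → b j + 1 ≤ b s := by
    intro s hs
    have h1 : b s ≠ b j0 := Nat.find_min hjex hs
    have h2 : b j0 ≤ b s := hb s j0 (by omega) hj0M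
    omega
  -- b i ≥ b j + 2
  have hbi2 : b j + 2 ≤ b i := by
    have h1 : a j0 ≤ a i0 := ha i0 j0 hi0j0 hj0M
    have h2 := hj0spec.2
    omega
  have hij : i < j := by
    by_contra hc
    push_neg at hc
    exact absurd (hb j i hc hiM) (by omega)
  -- entries after i (up to < M) are < b i
  have hA : ∀ t, i < t → t < M → b t < b i := by
    intro t ht htM
    have h1 : b t ≤ b c := hb c t (by omega) htM
    have h2 : b c < b i0 := by
      rcases hcspec with h | h
      · omega
      · exact h
    omega
  -- the transfer
  set b' : ℕ → ℕ := fun t => if t = i then b i - 1 else if t = j then b j + 1 else b t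
    with hb'def0
  have hb'i : b' i = b i - 1 := by simp [hb'def0]
  have hb'j : b' j = b j + 1 := by
    have hji : ¬ (j = i) := by omega
    simp [hb'def0, hji]
  have hb'other : ∀ t, t ≠ i → t ≠ j → b' t = b t := by
    intro t h1 h2; simp [hb'def0, h1, h2]
  -- b' is antitone
  have hb'anti : ∀ s t, s ≤ t → t < M → b' t ≤ b' s := by
    apply anti_of_adj
    intro t htM
    by_cases h1 : t = i
    · subst h1
      by_cases h2 : i + 1 = j
      · rw [h2, hb'j, hb'i]
        omega
      · rw [hb'i, hb'other (i+1) (by omega) h2]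
        have := hA (i + 1) (by omega) htM
        omega
    · by_cases h2 : t = j
      · subst h2
        rw [hb'j, hb'other (j+1) (by omega) (by omega)]
        have := hb j (j+1) (by omega) htM
        omega
      · rw [hb'other t h1 h2]
        by_cases h3 : t + 1 = i
        · rw [show b' (t+1) = b i - 1 from h3 ▸ hb'i]
          have := hb t i (by omega) hiM
          omega
        · by_cases h4 : t + 1 = j
          · rw [show b' (t+1) = b j + 1 from h4 ▸ hb'j]
            exact hBs t (by omega)
          · rw [hb'other (t+1) h3 h4]
            exact hb t (t+1) (by omega) htM
  -- partial sums of b'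
  have hS : ∀ k, (∑ t ∈ range k, b' t) + (if i < k ∧ k ≤ j then 1 else 0)
      = ∑ t ∈ range k, b t := by
    intro k
    induction k with
    | zero => simp
    | succ k IH =>
      rw [Finset.sum_range_succ, Finset.sum_range_succ]
      rcases lt_trichotomy k i with h | h | h
      · rw [hb'other k (by omega) (by omega)]
        rw [if_neg (by omega)] at IH
        rw [if_neg (by omega)]
        omega
      · subst h
        rw [hb'i]
        rw [if_neg (by omega)] at IH
        rw [if_pos (by omega)]
        omega
      · rcases lt_trichotomy k j with h2 | h2 | h2
        · rw [hb'other k (by omega) (by omega)]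
          rw [if_pos (by omega)] at IH
          rw [if_pos (by omega)]
          omega
        · subst h2
          rw [hb'j]
          rw [if_pos (by omega)] at IH
          rw [if_neg (by omega)]
          omega
        · rw [hb'other k (by omega) (by omega)]
          rw [if_neg (by omega)] at IH
          rw [if_neg (by omega)]
          omega
  -- partial sums still dominate
  have hle' : ∀ k, k ≤ M → ∑ t ∈ range k, a t ≤ ∑ t ∈ range k, b' t := by
    intro k hk
    have h1 := hS k
    by_cases hc : i < k ∧ k ≤ j
    · have h3 := hwin k (by omega) (by omega)
      rw [if_pos hc] at h1
      omega
    · have h2 := hle k hk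
      rw [if_neg hc] at h1
      omega
  have htot' : ∑ t ∈ range M, a t = ∑ t ∈ range M, b' t := by
    have h1 := hS M
    rw [if_neg (by omega)] at h1
    omega
  -- measure decreases
  have hmeas : ∑ k ∈ range (M + 1), (∑ t ∈ range k, b' t - ∑ t ∈ range k, a t) < D := by
    rw [← hD]
    apply Finset.sum_lt_sum
    · intro k _
      have h1 := hS k
      have : ∑ t ∈ range k, b' t ≤ ∑ t ∈ range k, b t := by
        by_cases hc : i < k ∧ k ≤ j
        · rw [if_pos hc] at h1; omega
        · rw [if_neg hc] at h1; omega
      omega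
    · refine ⟨j, Finset.mem_range.mpr (by omega), ?_⟩
      have h1 := hS j
      rw [if_pos (by omega)] at h1
      have h2 := hwin j (by omega) hjj0
      omega
  -- apply the inductive hypothesis
  have hIH := ih _ hmeas b' hb'anti hle' htot' rfl
  -- product increases under the transfer
  have hprod : ∏ t ∈ range M, (b t + 1) ≤ ∏ t ∈ range M, (b' t + 1) := by
    have hiMem : i ∈ range M := Finset.mem_range.mpr hiM
    have hjMem : j ∈ (range M).erase i :=
      Finset.mem_erase.mpr ⟨by omega, Finset.mem_range.mpr hjM⟩
    have e1 : ∏ t ∈ range M, (b t + 1)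
        = (b i + 1) * ((b j + 1) * ∏ t ∈ ((range M).erase i).erase j, (b t + 1)) := by
      rw [← Finset.mul_prod_erase (range M) (fun t => b t + 1) hiMem,
        ← Finset.mul_prod_erase ((range M).erase i) (fun t => b t + 1) hjMem]
    have e2 : ∏ t ∈ range M, (b' t + 1)
        = (b' i + 1) * ((b' j + 1) * ∏ t ∈ ((range M).erase i).erase j, (b' t + 1)) := by
      rw [← Finset.mul_prod_erase (range M) (fun t => b' t + 1) hiMem,
        ← Finset.mul_prod_erase ((range M).erase i) (fun t => b' t + 1) hjMem]
    have e3 : ∏ t ∈ ((range M).erase i).erase j, (b' t + 1)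
        = ∏ t ∈ ((range M).erase i).erase j, (b t + 1) := by
      apply Finset.prod_congr rfl
      intro t ht
      have h1 := Finset.mem_erase.mp ht
      have h2 := Finset.mem_erase.mp h1.2
      rw [hb'other t h2.1 h1.1]
    rw [e1, e2, e3, hb'i, hb'j]
    have hkey : (b i + 1) * (b j + 1) ≤ (b i - 1 + 1) * (b j + 1 + 1) := by
      have h1 : b i - 1 + 1 = b i := by omega
      rw [h1]
      calc (b i + 1) * (b j + 1) = b i * b j + (b i + b j + 1) := by ring
        _ ≤ b i * b j + (b i + b i) := by omega
        _ = b i * (b j + 1 + 1) := by ring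
    calc (b i + 1) * ((b j + 1) * ∏ t ∈ ((range M).erase i).erase j, (b t + 1))
        = ((b i + 1) * (b j + 1)) * ∏ t ∈ ((range M).erase i).erase j, (b t + 1) := by ring
      _ ≤ ((b i - 1 + 1) * (b j + 1 + 1)) * ∏ t ∈ ((range M).erase i).erase j, (b t + 1) :=
          Nat.mul_le_mul_right _ hkey
      _ = (b i - 1 + 1) * ((b j + 1 + 1) * ∏ t ∈ ((range M).erase i).erase j, (b t + 1)) := by
          ring
  exact le_trans hprod hIH

theorem prod_succ_schur_concave {M N : ℕ} (n m : Fin M → ℕ)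
    (hn : Antitone n) (hm : Antitone m)
    (hns : ∑ i, n i = N) (hms : ∑ i, m i = N)
    (hmaj : Maj n m) :
    min (∏ i, (n i + 1)) (∏ j, (m j + 1)) = ∏ j, (m j + 1) ∧
      ∏ j, (m j + 1) ≤ ∏ i, (n i + 1) := by
  set a : ℕ → ℕ := fun t => if h : t < M then n ⟨t, h⟩ else 0 with hadef
  set b : ℕ → ℕ := fun t => if h : t < M then m ⟨t, h⟩ else 0 with hbdef
  have haval : ∀ i : Fin M, a ↑i = n i := fun i => by simp [hadef]
  have hbval : ∀ i : Fin M, b ↑i = m i := fun i => by simp [hbdef]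
  have hfilter : ∀ (x : Fin M → ℕ) (x' : ℕ → ℕ), (∀ i : Fin M, x' ↑i = x i) → ∀ k, k ≤ M →
      ∑ i ∈ univ.filter (fun i : Fin M => (i : ℕ) < k), x i = ∑ t ∈ range k, x' t := by
    intro x x' hx k hk
    rw [Finset.sum_filter]
    have : ∀ i : Fin M, (if (i : ℕ) < k then x i else 0)
        = (fun t => if t < k then x' t else 0) ↑i := by
      intro i; simp only [hx]
    rw [Finset.sum_congr rfl fun i _ => this i,
      Fin.sum_univ_eq_sum_range (fun t => if t < k then x' t else 0) M, ← Finset.sum_filter]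
    congr 1
    ext t
    simp only [Finset.mem_filter, Finset.mem_range]
    omega
  have hatot : ∑ t ∈ range M, a t = ∑ i, n i := by
    rw [← Fin.sum_univ_eq_sum_range a M]
    exact Finset.sum_congr rfl fun i _ => haval i
  have hbtot : ∑ t ∈ range M, b t = ∑ i, m i := by
    rw [← Fin.sum_univ_eq_sum_range b M]
    exact Finset.sum_congr rfl fun i _ => hbval i
  have ha : ∀ s t, s ≤ t → t < M → a t ≤ a s := by
    intro s t hst htM
    have hsM : s < M := by omega
    have : n ⟨t, htM⟩ ≤ n ⟨s, hsM⟩ := hn (by exact hst)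
    simp only [hadef, dif_pos htM, dif_pos hsM]
    exact this
  have hb : ∀ s t, s ≤ t → t < M → b t ≤ b s := by
    intro s t hst htM
    have hsM : s < M := by omega
    have : m ⟨t, htM⟩ ≤ m ⟨s, hsM⟩ := hm (by exact hst)
    simp only [hbdef, dif_pos htM, dif_pos hsM]
    exact this
  have hle : ∀ k, k ≤ M → ∑ t ∈ range k, a t ≤ ∑ t ∈ range k, b t := by
    intro k hk
    rcases Nat.eq_or_lt_of_le hk with rfl | hk'
    · rw [hatot, hbtot, hns, hms]
    · have := hmaj.1 k hk'
      rwa [hfilter n a haval k hk, hfilter m b hbval k hk] at this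
  have htot : ∑ t ∈ range M, a t = ∑ t ∈ range M, b t := by
    rw [hatot, hbtot, hns, hms]
  have hmain := key M a ha _ b hb hle htot rfl
  have hna : ∏ i, (n i + 1) = ∏ t ∈ range M, (a t + 1) := by
    rw [← Fin.prod_univ_eq_prod_range (fun t => a t + 1) M]
    exact Finset.prod_congr rfl fun i _ => by rw [haval i]
  have hmb : ∏ j, (m j + 1) = ∏ t ∈ range M, (b t + 1) := by
    rw [← Fin.prod_univ_eq_prod_range (fun t => b t + 1) M]
    exact Finset.prod_congr rfl fun i _ => by rw [hbval i]
  have hfin : ∏ j, (m j + 1) ≤ ∏ i, (n i + 1) := by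
    rw [hna, hmb]; exact hmain
  exact ⟨min_eq_right hfin, hfin⟩
end
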